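/- arXiv:2501.01249 — 2 statements merged into one kernel-verified Lean document; each statement's English description precedes it below -/
import Mathlib

section
/- Let Φ be a trace-preserving positive linear map on operators on a finite-dimensional Hilbert space, let p : ℕ → Matrix → ℝ be defined by p_n(ρ) = Tr(P Φⁿ(ρ)) for a fixed positive semidefinite operator P. Suppose τ is a density operator with Σ_n p_n(τ) = ∞, and ρ is a faithful density operator. Then Σ_n p_n(ρ) = ∞. -/
/-!
Since `ρ` is faithful, its smallest eigenvalue `c` is positive, and `τ ≤ 1` because its
eigenvalues are nonnegative and sum to `1`; hence `c • τ ≤ ρ` in the Loewner order. The maps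
`X ↦ Re Tr (P Φⁿ X)` are monotone and real-homogeneous, so `c * p n τ ≤ p n ρ` with `p n τ ≥ 0`,
and summability of `p · ρ` would force that of `p · τ`.
-/

open Matrix ComplexOrder
open scoped MatrixOrder

namespace Matrix

variable {n 𝕜 : Type*} [RCLike 𝕜]

lemma monotone_of_map_posSemidef [Fintype n] (Φ : Matrix n n 𝕜 →ₗ[𝕜] Matrix n n 𝕜)
    (hΦ : ∀ X, X.PosSemidef → (Φ X).PosSemidef) : Monotone Φ := fun X Y hXY => by
  rw [le_iff, ← map_sub]
  exact hΦ _ hXY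

variable [Fintype n] [DecidableEq n]

lemma PosSemidef.trace_mul_nonneg {P X : Matrix n n 𝕜} (hP : P.PosSemidef) (hX : X.PosSemidef) :
    0 ≤ (P * X).trace := by
  have hcycle : (P * X).trace = (CFC.sqrt P * X * CFC.sqrt P).trace := by
    nth_rw 1 [← CFC.sqrt_mul_sqrt_self P hP.nonneg, mul_assoc, trace_mul_comm]
  rw [hcycle]
  exact (conjugate_nonneg_of_nonneg hX.nonneg (CFC.sqrt_nonneg P)).posSemidef.trace_nonneg

lemma PosSemidef.re_trace_mul_mono {P : Matrix n n 𝕜} (hP : P.PosSemidef) :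
    Monotone fun X : Matrix n n 𝕜 => RCLike.re (P * X).trace := fun X Y hXY => by
  have h := hP.trace_mul_nonneg (le_iff.1 hXY)
  rw [Matrix.mul_sub, trace_sub, sub_nonneg] at h
  exact RCLike.re_le_re h

lemma PosSemidef.le_one_of_trace_eq_one {τ : Matrix n n 𝕜} (hτ : τ.PosSemidef)
    (htr : τ.trace = 1) : τ ≤ 1 := by
  rw [CFC.le_one_iff (R := ℝ) τ hτ.isHermitian.isSelfAdjoint,
    hτ.isHermitian.spectrum_real_eq_range_eigenvalues]
  rintro _ ⟨i, rfl⟩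
  have hsum : ∑ j, hτ.isHermitian.eigenvalues j = 1 := by
    simpa [htr] using (congrArg RCLike.re hτ.isHermitian.trace_eq_sum_eigenvalues).symm
  rw [← hsum]
  exact Finset.single_le_sum (fun j _ => hτ.eigenvalues_nonneg j) (Finset.mem_univ i)

lemma PosDef.exists_pos_smul_le {ρ τ : Matrix n n 𝕜} (hρ : ρ.PosDef) (hτ : τ ≤ 1) :
    ∃ c : ℝ, 0 < c ∧ c • τ ≤ ρ := by
  cases subsingleton_or_nontrivial (Matrix n n 𝕜)
  · exact ⟨1, one_pos, (Subsingleton.elim _ _).le⟩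
  obtain ⟨c, hc, hcρ⟩ := (CFC.exists_pos_algebraMap_le_iff hρ.isHermitian.isSelfAdjoint).2
    fun x hx => hρ.isStrictlyPositive.spectrum_pos hx
  refine ⟨c, hc, le_trans ?_ hcρ⟩
  rw [Algebra.algebraMap_eq_smul_one, le_iff, ← smul_sub]
  exact (le_iff.1 hτ).smul hc.le

end Matrix

lemma not_summable_of_mul_le {f g : ℕ → ℝ} {c : ℝ} (hc : 0 < c) (hf : ∀ n, 0 ≤ f n)
    (hfg : ∀ n, c * f n ≤ g n) (hf_div : ¬ Summable f) : ¬ Summable g := fun hg =>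
  hf_div <| (summable_mul_left_iff hc.ne').1 <|
    hg.of_nonneg_of_le (fun n => mul_nonneg hc.le (hf n)) hfg

theorem stmt_2_general {d : ℕ} (Φ : Matrix (Fin d) (Fin d) ℂ →ₗ[ℂ] Matrix (Fin d) (Fin d) ℂ)
    (hΦpos : ∀ ρ, ρ.PosSemidef → (Φ ρ).PosSemidef)
    (P : Matrix (Fin d) (Fin d) ℂ) (hP : P.PosSemidef)
    (p : ℕ → Matrix (Fin d) (Fin d) ℂ → ℝ)
    (hp : ∀ n ρ, p n ρ = ((P * ((⇑Φ)^[n] ρ)).trace).re)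
    (τ : Matrix (Fin d) (Fin d) ℂ) (hτ : τ.PosSemidef) (hτtr : τ.trace = 1)
    (hτdiv : ¬ Summable (fun n => p n τ))
    (ρ : Matrix (Fin d) (Fin d) ℂ) (hρ : ρ.PosDef) :
    ¬ Summable (fun n => p n ρ) := by
  obtain ⟨c, hc, hcτ⟩ := hρ.exists_pos_smul_le (hτ.le_one_of_trace_eq_one hτtr)
  have hp_mono : ∀ n, Monotone (p n) := fun n => by
    simp only [funext (hp n)]
    exact hP.re_trace_mul_mono.comp ((Matrix.monotone_of_map_posSemidef Φ hΦpos).iterate n)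
  have hp_smul : ∀ n X, p n (c • X) = c * p n X := fun n X => by
    rw [hp, hp, ← Module.End.pow_apply, LinearMap.map_smul_of_tower, Matrix.mul_smul, trace_smul,
      Complex.smul_re, smul_eq_mul, Module.End.pow_apply]
  have hp_zero : ∀ n, p n 0 = 0 := fun n => by simp [hp, iterate_map_zero]
  refine not_summable_of_mul_le hc (fun n => ?_) (fun n => ?_) hτdiv
  · exact hp_zero n ▸ hp_mono n hτ.nonneg
  · exact hp_smul n τ ▸ hp_mono n hcτ

theorem stmt_2 {d : ℕ} (Φ : Matrix (Fin d) (Fin d) ℂ →ₗ[ℂ] Matrix (Fin d) (Fin d) ℂ)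
    (hΦtr : ∀ ρ, (Φ ρ).trace = ρ.trace)
    (hΦpos : ∀ ρ, ρ.PosSemidef → (Φ ρ).PosSemidef)
    (P : Matrix (Fin d) (Fin d) ℂ) (hP : P.PosSemidef)
    (p : ℕ → Matrix (Fin d) (Fin d) ℂ → ℝ)
    (hp : ∀ n ρ, p n ρ = ((P * ((⇑Φ)^[n] ρ)).trace).re)
    (τ : Matrix (Fin d) (Fin d) ℂ) (hτ : τ.PosSemidef) (hτtr : τ.trace = 1)
    (hτdiv : ¬ Summable (fun n => p n τ))
    (ρ : Matrix (Fin d) (Fin d) ℂ) (hρ : ρ.PosDef) (hρtr : ρ.trace = 1) :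
    ¬ Summable (fun n => p n ρ) :=
  stmt_2_general Φ hΦpos P hP p hp τ hτ hτtr hτdiv ρ hρ
end

section
/- Let Φ be a trace-preserving positive linear map on operators of a finite-dimensional Hilbert space 𝔥, and suppose Φ does not admit two nonzero invariant subspaces S₁, S₂ with S₁ ∩ S₂ = {0}. Then Φ has a unique invariant density operator. -/
/-!
`Φ - id` annihilates the trace, so it is not onto and `Φ` has a nonzero fixed point; a
positive `ℂ`-linear map commutes with `star`, so the real or imaginary part of that fixed point
is a nonzero self-adjoint fixed point `G`. Split `G = P - N` into positive and negative parts and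
let `Q` be the spectral projection of `G` onto its positive eigenvalues. Trace preservation gives
`tr ((1 - Q) Φ P) + tr (Q Φ N) = 0` with both terms nonnegative, whence `Φ P = P`. A positive
operator supported in `range Q` is dominated by a multiple of `Q`, hence of `P`, so its image is
dominated by a multiple of `P`, hence of `Q`: `range Q` is an enclosure, and so is the
corresponding subspace for `-G`. They intersect trivially, so one of them is zero, i.e. `G` is
semidefinite. Normalising gives an invariant state; the difference of two invariant states is a
traceless semidefinite fixed point, hence zero.
-/

open Matrix ComplexOrder

/-- `S` is an invariant subspace (enclosure) for `Φ`: every positive semidefinite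
operator supported in `S` is mapped to an operator supported in `S`. -/
def IsEnclosure {d : ℕ} (Φ : Matrix (Fin d) (Fin d) ℂ →ₗ[ℂ] Matrix (Fin d) (Fin d) ℂ)
    (S : Submodule ℂ (Fin d → ℂ)) : Prop :=
  ∀ ρ : Matrix (Fin d) (Fin d) ℂ, ρ.PosSemidef →
    LinearMap.range ρ.mulVecLin ≤ S → LinearMap.range (Φ ρ).mulVecLin ≤ S

open scoped MatrixOrder ComplexStarModule

lemma LinearMap.exists_ne_zero_apply_eq_self_of_comp_eq {K V : Type*} [Field K] [AddCommGroup V]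
    [Module K V] [FiniteDimensional K V] (f : V →ₗ[K] V) {τ : V →ₗ[K] K} (hτ : τ ≠ 0)
    (hτf : τ ∘ₗ f = τ) : ∃ v, v ≠ 0 ∧ f v = v := by
  by_contra! h
  set g : V →ₗ[K] V := f - LinearMap.id
  have hinj : Function.Injective g := by
    refine (injective_iff_map_eq_zero g).2 fun v hv => by_contra fun hv0 => h v hv0 ?_
    rwa [sub_apply, id_apply, sub_eq_zero] at hv
  obtain ⟨w, hw⟩ := DFunLike.ne_iff.1 hτ
  obtain ⟨v, rfl⟩ := injective_iff_surjective.1 hinj w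
  refine hw ?_
  rw [sub_apply, id_apply, map_sub, ← comp_apply, hτf, sub_self, zero_apply]

namespace Matrix

section Range

variable {n R : Type*} [Fintype n] [CommRing R]

lemma mem_range_mulVecLin_iff_of_isIdempotentElem {Q : Matrix n n R} (hQ : IsIdempotentElem Q)
    {x : n → R} : x ∈ LinearMap.range Q.mulVecLin ↔ Q *ᵥ x = x := by
  refine ⟨?_, fun hx => ⟨x, hx⟩⟩
  rintro ⟨y, rfl⟩
  simp only [mulVecLin_apply, mulVec_mulVec, hQ.eq]

lemma range_mulVecLin_le_iff_of_isIdempotentElem {Q A : Matrix n n R} (hQ : IsIdempotentElem Q) :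
    LinearMap.range A.mulVecLin ≤ LinearMap.range Q.mulVecLin ↔ Q * A = A := by
  refine ⟨fun h => ext_iff_mulVec.2 fun x => ?_, fun h => ?_⟩
  · rw [← mulVec_mulVec]
    exact (mem_range_mulVecLin_iff_of_isIdempotentElem hQ).1 (h (LinearMap.mem_range_self _ x))
  · rw [← h, mulVecLin_mul]
    exact LinearMap.range_comp_le_range _ _

lemma range_mulVecLin_inf_eq_bot {P Q : Matrix n n R} (hP : IsIdempotentElem P)
    (hQ : IsIdempotentElem Q) (hPQ : P * Q = 0) :
    LinearMap.range P.mulVecLin ⊓ LinearMap.range Q.mulVecLin = ⊥ := by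
  refine (Submodule.eq_bot_iff _).2 fun x hx => ?_
  have hxP := (mem_range_mulVecLin_iff_of_isIdempotentElem hP).1 (Submodule.mem_inf.1 hx).1
  have hxQ := (mem_range_mulVecLin_iff_of_isIdempotentElem hQ).1 (Submodule.mem_inf.1 hx).2
  rw [← hxP, ← hxQ, mulVec_mulVec, hPQ, zero_mulVec]

lemma range_mulVecLin_ne_bot {A : Matrix n n R} (hA : A ≠ 0) :
    LinearMap.range A.mulVecLin ≠ ⊥ := by
  rw [Ne, LinearMap.range_eq_bot, ← mulVecLin_zero]
  exact fun h => hA (mulVec_injective (congrArg DFunLike.coe h))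

end Range

section Trace

variable {n : Type*} [Fintype n]

lemma eq_zero_of_trace_eq_zero_of_nonneg_or_nonpos {A : Matrix n n ℂ} (hA : 0 ≤ A ∨ A ≤ 0)
    (htr : A.trace = 0) : A = 0 := by
  rcases hA with hA | hA
  · exact (nonneg_iff_posSemidef.1 hA).trace_eq_zero_iff.1 htr
  · refine neg_eq_zero.1 ((nonneg_iff_posSemidef.1 (neg_nonneg.2 hA)).trace_eq_zero_iff.1 ?_)
    rw [trace_neg, htr, neg_zero]

end Trace

variable {n : Type*} [Fintype n] [DecidableEq n]

lemma trace_mul_eq_trace_conjTranspose_mul_self {A B : Matrix n n ℂ} (hA : 0 ≤ A) (hB : 0 ≤ B) :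
    (A * B).trace =
      ((CFC.sqrt A * CFC.sqrt B)ᴴ * (CFC.sqrt A * CFC.sqrt B)).trace := by
  have hsA : (CFC.sqrt A)ᴴ = CFC.sqrt A := (CFC.sqrt_nonneg A).isSelfAdjoint
  have hsB : (CFC.sqrt B)ᴴ = CFC.sqrt B := (CFC.sqrt_nonneg B).isSelfAdjoint
  conv_lhs => rw [← CFC.sqrt_mul_sqrt_self A hA, ← CFC.sqrt_mul_sqrt_self B hB]
  rw [conjTranspose_mul, hsA, hsB]
  simp only [← Matrix.mul_assoc]
  rw [trace_mul_comm]
  simp only [Matrix.mul_assoc]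

lemma trace_mul_nonneg {A B : Matrix n n ℂ} (hA : 0 ≤ A) (hB : 0 ≤ B) : 0 ≤ (A * B).trace := by
  rw [trace_mul_eq_trace_conjTranspose_mul_self hA hB]
  exact (posSemidef_conjTranspose_mul_self _).trace_nonneg

lemma mul_eq_zero_of_trace_mul_eq_zero {A B : Matrix n n ℂ} (hA : 0 ≤ A) (hB : 0 ≤ B)
    (h : (A * B).trace = 0) : A * B = 0 := by
  rw [trace_mul_eq_trace_conjTranspose_mul_self hA hB,
    trace_conjTranspose_mul_self_eq_zero_iff] at h
  rw [← CFC.sqrt_mul_sqrt_self A hA, ← CFC.sqrt_mul_sqrt_self B hB, Matrix.mul_assoc,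
    ← Matrix.mul_assoc (CFC.sqrt A) (CFC.sqrt B), h, Matrix.zero_mul, Matrix.mul_zero]

lemma continuousOn_spectrum (f : ℝ → ℝ) (A : Matrix n n ℂ) : ContinuousOn f (spectrum ℝ A) :=
  finite_real_spectrum.continuousOn f

lemma exists_cfc_le_smul_cfc {A : Matrix n n ℂ} (hA : IsSelfAdjoint A) {f g : ℝ → ℝ}
    (hg : ∀ x ∈ spectrum ℝ A, 0 ≤ g x) (hfg : ∀ x ∈ spectrum ℝ A, 0 < f x → 0 < g x) :
    ∃ c : ℝ, 0 ≤ c ∧ cfc f A ≤ c • cfc g A := by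
  obtain ⟨c, hc⟩ := ((finite_real_spectrum (A := A)).image fun x => f x / g x).bddAbove
  refine ⟨max c 0, le_max_right _ _, ?_⟩
  rw [← cfc_const_mul _ _ _ (continuousOn_spectrum _ _), cfc_le_iff _ _ _
    (continuousOn_spectrum _ _) (continuousOn_spectrum _ _)]
  intro x hx
  rcases le_or_gt (f x) 0 with hfx | hfx
  · exact hfx.trans (mul_nonneg (le_max_right _ _) (hg x hx))
  · have hgx := hfg x hx hfx
    calc f x = f x / g x * g x := (div_mul_cancel₀ _ hgx.ne').symm
      _ ≤ max c 0 * g x := by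
        gcongr
        exact (hc ⟨x, hx, rfl⟩).trans (le_max_left _ _)

noncomputable def posSpectralProj (A : Matrix n n ℂ) : Matrix n n ℂ :=
  cfc (fun x : ℝ => if 0 < x then (1 : ℝ) else 0) A

lemma isStarProjection_posSpectralProj (A : Matrix n n ℂ) :
    IsStarProjection (posSpectralProj A) := by
  refine ⟨?_, cfc_predicate _ A⟩
  rw [IsIdempotentElem, posSpectralProj, ← cfc_mul _ _ _ (continuousOn_spectrum _ _)
    (continuousOn_spectrum _ _)]
  congr 1
  ext x
  split_ifs <;> simp

lemma posSpectralProj_mul_posSpectralProj_neg (A : Matrix n n ℂ) (hA : IsSelfAdjoint A) :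
    posSpectralProj A * posSpectralProj (-A) = 0 := by
  rw [posSpectralProj, posSpectralProj,
    ← cfc_comp_neg _ _ (((finite_real_spectrum (A := A)).image _).continuousOn _),
    ← cfc_mul _ _ _ (continuousOn_spectrum _ _) (continuousOn_spectrum _ _)]
  convert cfc_zero ℝ A using 1
  congr 1
  ext x
  by_cases hx : 0 < x
  · simp [hx, hx.le]
  · simp [hx]

lemma nonpos_of_posSpectralProj_eq_zero {G : Matrix n n ℂ} (hG : IsSelfAdjoint G)
    (h : posSpectralProj G = 0) : G ≤ 0 := by
  obtain ⟨c, -, hc⟩ := exists_cfc_le_smul_cfc hG (f := id)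
    (g := fun x : ℝ => if 0 < x then (1 : ℝ) else 0) (fun x _ => by split_ifs <;> simp)
    (fun x _ (hx : 0 < x) => by simp [hx])
  rwa [cfc_id ℝ G, ← posSpectralProj, h, smul_zero] at hc

lemma IsStarProjection.le_smul_of_mul_eq {Q ρ : Matrix n n ℂ} (hQ : IsStarProjection Q)
    (hρ : 0 ≤ ρ) (hQρ : Q * ρ = ρ) : ∃ t : ℝ, 0 ≤ t ∧ ρ ≤ t • Q := by
  obtain ⟨t, ht⟩ := (finite_real_spectrum (A := ρ)).bddAbove
  have hρt : ρ ≤ algebraMap ℝ _ (max t 0) :=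
    le_algebraMap_of_spectrum_le fun x hx => (ht hx).trans (le_max_left _ _)
  have hρQ : ρ * Q = ρ := by
    simpa [hQ.isSelfAdjoint.star_eq, hρ.isSelfAdjoint.star_eq] using congrArg star hQρ
  refine ⟨max t 0, le_max_right _ _, ?_⟩
  calc ρ = star Q * ρ * Q := by rw [hQ.isSelfAdjoint.star_eq, hQρ, hρQ]
    _ ≤ star Q * algebraMap ℝ _ (max t 0) * Q := star_left_conjugate_le_conjugate hρt Q
    _ = max t 0 • Q := by
      rw [hQ.isSelfAdjoint.star_eq, Algebra.algebraMap_eq_smul_one, Matrix.mul_smul,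
        Matrix.mul_one, Matrix.smul_mul, hQ.isIdempotentElem.eq]

lemma IsStarProjection.mul_eq_of_le_smul {Q A : Matrix n n ℂ} (hQ : IsStarProjection Q)
    (hA : 0 ≤ A) {t : ℝ} (h : A ≤ t • Q) : Q * A = A := by
  have hQ' : 0 ≤ 1 - Q := hQ.one_sub_nonneg
  have hle : ((1 - Q) * A).trace ≤ 0 := by
    have := trace_mul_nonneg hQ' (sub_nonneg.2 h)
    rwa [Matrix.mul_sub, Matrix.mul_smul, hQ.one_sub_mul_self, smul_zero, zero_sub,
      trace_neg, neg_nonneg] at this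
  have hz := mul_eq_zero_of_trace_mul_eq_zero hQ' hA (le_antisymm hle (trace_mul_nonneg hQ' hA))
  rwa [Matrix.sub_mul, Matrix.one_mul, sub_eq_zero, eq_comm] at hz

lemma exists_map_eq_self_ne_zero [Nonempty n] (Φ : Matrix n n ℂ →ₗ[ℂ] Matrix n n ℂ)
    (hΦ : ∀ A, (Φ A).trace = A.trace) : ∃ A, A ≠ 0 ∧ Φ A = A := by
  refine Φ.exists_ne_zero_apply_eq_self_of_comp_eq (τ := traceLinearMap n ℂ ℂ) ?_
    (LinearMap.ext hΦ)
  refine DFunLike.ne_iff.2 ⟨1, ?_⟩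
  simp [Fintype.card_ne_zero]

end Matrix

namespace PositiveLinearMap

section StarModule

variable {A B : Type*} [AddCommGroup A] [PartialOrder A] [StarAddMonoid A] [Module ℂ A]
  [StarModule ℂ A] [SelfAdjointDecompose A]
  [NonUnitalRing B] [PartialOrder B] [StarRing B] [StarOrderedRing B] [Module ℂ B] [StarModule ℂ B]

lemma map_star_of_complex (Φ : A →ₚ[ℂ] B) (a : A) : Φ (star a) = star (Φ a) := by
  have hre := (ℜ a).2.map' Φ
  have him := (ℑ a).2.map' Φ
  conv_lhs => rw [← realPart_add_I_smul_imaginaryPart a]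
  conv_rhs => rw [← realPart_add_I_smul_imaginaryPart a]
  rw [star_add, star_smul, map_add, map_add, map_smul, map_smul, star_add, star_smul,
    hre.star_eq, him.star_eq]
  simp

end StarModule

section StarOrderedRing

variable {A : Type*} [NonUnitalRing A] [PartialOrder A] [StarRing A] [StarOrderedRing A]
  [Module ℂ A] [StarModule ℂ A] [SelfAdjointDecompose A]

lemma exists_isSelfAdjoint_map_eq_self (Φ : A →ₚ[ℂ] A) {a : A} (ha : Φ a = a) (ha0 : a ≠ 0) :
    ∃ b : A, IsSelfAdjoint b ∧ Φ b = b ∧ b ≠ 0 := by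
  have hstar : Φ (star a) = star a := by rw [map_star_of_complex, ha]
  have hre : Φ (ℜ a) = ℜ a := by
    rw [realPart_apply_coe, map_smul_of_tower, map_add, ha, hstar]
  have him : Φ (ℑ a) = ℑ a := by
    rw [imaginaryPart_apply_coe, map_smul, map_smul_of_tower, map_sub, ha, hstar]
  by_contra! h
  refine ha0 ?_
  rw [← realPart_add_I_smul_imaginaryPart a, h _ (ℜ a).2 hre, h _ (ℑ a).2 him, smul_zero, add_zero]

end StarOrderedRing

section Matrix

variable {n : Type*} [Fintype n] [DecidableEq n]

lemma map_eq_self_of_map_sub_eq (Φ : Matrix n n ℂ →ₚ[ℂ] Matrix n n ℂ)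
    (hΦ : ∀ A, (Φ A).trace = A.trace) {P N Q : Matrix n n ℂ} (hfix : Φ (P - N) = P - N)
    (hP : 0 ≤ P) (hN : 0 ≤ N) (hQ : IsStarProjection Q) (hQP : Q * P = P) (hQN : Q * N = 0) :
    Φ P = P := by
  have hQ' : 0 ≤ 1 - Q := hQ.one_sub_nonneg
  have hΦP := Φ.map_nonneg hP
  have hΦN := Φ.map_nonneg hN
  -- `tr (Q Φ (P - N)) = tr (Q (P - N)) = tr P = tr (Φ P)`
  have hsum : ((1 - Q) * Φ P).trace + (Q * Φ N).trace = 0 := by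
    have hQfix := congrArg (fun X => (Q * X).trace) hfix
    simp only [map_sub, Matrix.mul_sub, trace_sub, hQP, hQN, sub_zero] at hQfix
    rw [Matrix.sub_mul, Matrix.one_mul, trace_sub, hΦ, ← hQfix]
    ring
  have hP0 : ((1 - Q) * Φ P).trace = 0 :=
    le_antisymm (by rw [← hsum]; exact le_add_of_nonneg_right (trace_mul_nonneg hQ.nonneg hΦN))
      (trace_mul_nonneg hQ' hΦP)
  have hN0 : Q * Φ N = 0 :=
    mul_eq_zero_of_trace_mul_eq_zero hQ.nonneg hΦN (by rwa [hP0, zero_add] at hsum)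
  have hPQ := mul_eq_zero_of_trace_mul_eq_zero hQ' hΦP hP0
  rw [Matrix.sub_mul, Matrix.one_mul, sub_eq_zero] at hPQ
  rw [hPQ, ← sub_zero (Q * Φ P), ← hN0, ← Matrix.mul_sub, ← map_sub, hfix, Matrix.mul_sub, hQP,
    hQN, sub_zero]

lemma map_cfc_posPart_eq_self (Φ : Matrix n n ℂ →ₚ[ℂ] Matrix n n ℂ)
    (hΦ : ∀ A, (Φ A).trace = A.trace) {G : Matrix n n ℂ} (hG : IsSelfAdjoint G)
    (hfix : Φ G = G) : Φ (cfc (fun x : ℝ => max x 0) G) = cfc (fun x : ℝ => max x 0) G := by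
  have hsplit : G = cfc (fun x : ℝ => max x 0) G - cfc (fun x : ℝ => max (-x) 0) G := by
    rw [← cfc_sub _ _ _ (continuousOn_spectrum _ _) (continuousOn_spectrum _ _)]
    conv_lhs => rw [← cfc_id ℝ G]
    congr 1
    ext x
    simp only [id]
    rcases le_total x 0 with hx | hx <;> simp [hx]
  rw [hsplit] at hfix
  refine map_eq_self_of_map_sub_eq Φ hΦ hfix (cfc_nonneg fun x _ => le_max_right _ _)
    (cfc_nonneg fun x _ => le_max_right _ _) (isStarProjection_posSpectralProj G) ?_ ?_
  all_goals
    rw [posSpectralProj, ← cfc_mul _ _ _ (continuousOn_spectrum _ _) (continuousOn_spectrum _ _)]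
  · congr 1
    ext x
    by_cases hx : 0 < x
    · simp [hx]
    · simp [hx, not_lt.1 hx]
  · convert cfc_zero ℝ G using 1
    congr 1
    ext x
    by_cases hx : 0 < x
    · simp [hx, hx.le]
    · simp [hx]

end Matrix

end PositiveLinearMap

section Enclosure

variable {d : ℕ}

lemma isEnclosure_range_posSpectralProj
    (Φ : Matrix (Fin d) (Fin d) ℂ →ₚ[ℂ] Matrix (Fin d) (Fin d) ℂ)
    (hΦ : ∀ A, (Φ A).trace = A.trace) {G : Matrix (Fin d) (Fin d) ℂ} (hG : IsSelfAdjoint G)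
    (hfix : Φ G = G) :
    IsEnclosure Φ.toLinearMap (LinearMap.range (posSpectralProj G).mulVecLin) := by
  set Q := posSpectralProj G
  set P := cfc (fun x : ℝ => max x 0) G
  have hQ : IsStarProjection Q := isStarProjection_posSpectralProj G
  obtain ⟨c₁, hc₁, hQP⟩ : ∃ c : ℝ, 0 ≤ c ∧ Q ≤ c • P :=
    exists_cfc_le_smul_cfc hG (fun x _ => le_max_right _ _)
      (fun x _ h => by split_ifs at h with hx <;> simp_all)
  obtain ⟨c₂, -, hPQ⟩ : ∃ c : ℝ, 0 ≤ c ∧ P ≤ c • Q :=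
    exists_cfc_le_smul_cfc hG (fun x _ => by split_ifs <;> simp)
      (fun x _ h => by simp_all)
  intro ρ hρ hρQ
  rw [← nonneg_iff_posSemidef] at hρ
  rw [range_mulVecLin_le_iff_of_isIdempotentElem hQ.isIdempotentElem] at hρQ ⊢
  obtain ⟨t, ht, hρt⟩ := hQ.le_smul_of_mul_eq hρ hρQ
  refine hQ.mul_eq_of_le_smul (Φ.map_nonneg hρ) (t := t * c₁ * c₂) ?_
  calc Φ ρ ≤ Φ ((t * c₁) • P) := by
        refine Φ.monotone' (hρt.trans ?_)
        rw [mul_smul]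
        exact smul_le_smul_of_nonneg_left hQP ht
    _ = (t * c₁) • P := by rw [Φ.map_smul_of_tower, Φ.map_cfc_posPart_eq_self hΦ hG hfix]
    _ ≤ (t * c₁ * c₂) • Q := by
        rw [mul_smul (t * c₁)]
        exact smul_le_smul_of_nonneg_left hPQ (mul_nonneg ht hc₁)

lemma exists_disjoint_enclosures
    (Φ : Matrix (Fin d) (Fin d) ℂ →ₚ[ℂ] Matrix (Fin d) (Fin d) ℂ)
    (hΦ : ∀ A, (Φ A).trace = A.trace) {G : Matrix (Fin d) (Fin d) ℂ} (hG : IsSelfAdjoint G)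
    (hfix : Φ G = G) (hG₁ : ¬ G ≤ 0) (hG₂ : ¬ 0 ≤ G) :
    ∃ S₁ S₂ : Submodule ℂ (Fin d → ℂ), S₁ ≠ ⊥ ∧ S₂ ≠ ⊥ ∧ S₁ ⊓ S₂ = ⊥ ∧
      IsEnclosure Φ.toLinearMap S₁ ∧ IsEnclosure Φ.toLinearMap S₂ :=
  ⟨_, _, range_mulVecLin_ne_bot fun h => hG₁ (nonpos_of_posSpectralProj_eq_zero hG h),
    range_mulVecLin_ne_bot fun h =>
      hG₂ (neg_nonpos.1 (nonpos_of_posSpectralProj_eq_zero hG.neg h)),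
    range_mulVecLin_inf_eq_bot (isStarProjection_posSpectralProj G).isIdempotentElem
      (isStarProjection_posSpectralProj (-G)).isIdempotentElem
      (posSpectralProj_mul_posSpectralProj_neg G hG),
    isEnclosure_range_posSpectralProj Φ hΦ hG hfix,
    isEnclosure_range_posSpectralProj Φ hΦ hG.neg (by rw [map_neg, hfix])⟩

end Enclosure

theorem stmt_15 {d : ℕ} (hd : 0 < d) (Φ : Matrix (Fin d) (Fin d) ℂ →ₗ[ℂ] Matrix (Fin d) (Fin d) ℂ)
    (hΦtr : ∀ ρ, (Φ ρ).trace = ρ.trace)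
    (hΦpos : ∀ ρ, ρ.PosSemidef → (Φ ρ).PosSemidef)
    (hni : ¬ ∃ S₁ S₂ : Submodule ℂ (Fin d → ℂ),
        S₁ ≠ ⊥ ∧ S₂ ≠ ⊥ ∧ S₁ ⊓ S₂ = ⊥ ∧ IsEnclosure Φ S₁ ∧ IsEnclosure Φ S₂) :
    ∃! ρ : Matrix (Fin d) (Fin d) ℂ, ρ.PosSemidef ∧ ρ.trace = 1 ∧ Φ ρ = ρ := by
  have : Nonempty (Fin d) := ⟨⟨0, hd⟩⟩
  let Ψ : Matrix (Fin d) (Fin d) ℂ →ₚ[ℂ] Matrix (Fin d) (Fin d) ℂ :=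
    .mk₀ Φ fun A hA => nonneg_iff_posSemidef.2 (hΦpos A (nonneg_iff_posSemidef.1 hA))
  have hdich (G : Matrix (Fin d) (Fin d) ℂ) (hG : IsSelfAdjoint G) (hfix : Φ G = G) :
      0 ≤ G ∨ G ≤ 0 := by
    by_contra! h
    exact hni (exists_disjoint_enclosures Ψ hΦtr hG hfix h.2 h.1)
  obtain ⟨X, hX0, hX⟩ := exists_map_eq_self_ne_zero Φ hΦtr
  obtain ⟨G, hG, hGfix, hG0⟩ : ∃ G, IsSelfAdjoint G ∧ Φ G = G ∧ G ≠ 0 :=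
    Ψ.exists_isSelfAdjoint_map_eq_self hX hX0
  obtain ⟨P, hP, hPfix, hP0⟩ : ∃ P, 0 ≤ P ∧ Φ P = P ∧ P ≠ 0 := by
    rcases hdich G hG hGfix with h | h
    · exact ⟨G, h, hGfix, hG0⟩
    · exact ⟨-G, neg_nonneg.2 h, by rw [map_neg, hGfix], neg_ne_zero.2 hG0⟩
  rw [nonneg_iff_posSemidef] at hP
  have htrP : P.trace ≠ 0 := fun h => hP0 (hP.trace_eq_zero_iff.1 h)
  refine existsUnique_of_exists_of_unique
    ⟨P.trace⁻¹ • P, hP.smul (inv_nonneg.2 hP.trace_nonneg),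
      by rw [trace_smul, smul_eq_mul, inv_mul_cancel₀ htrP], by rw [map_smul, hPfix]⟩ ?_
  rintro ρ σ ⟨hρ, hρtr, hρfix⟩ ⟨hσ, hσtr, hσfix⟩
  refine sub_eq_zero.1 (eq_zero_of_trace_eq_zero_of_nonneg_or_nonpos ?_ ?_)
  · exact hdich _ (hρ.1.sub hσ.1) (by rw [map_sub, hρfix, hσfix])
  · rw [trace_sub, hρtr, hσtr, sub_self]
end
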